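/- The right-angled Artin group functor A preserves equalizers of coreflexive pairs: if α, β : Γ → Δ are graph homomorphisms admitting a common retract ρ : Δ → Γ (ρ ∘ α = id_Γ = ρ ∘ β), and Θ is the full subgraph of Γ on the vertices v with αv = βv, then the subgroup of AΓ generated by the vertices of Θ is exactly the equalizer subgroup {g ∈ AΓ : (Aα)g = (Aβ)g}, and this subgroup is isomorphic to AΘ. -/

import Mathlib

/-- A (reflexive, symmetric) graph: a set of vertices with a reflexive
symmetric relation. -/
structure Gph : Type 1 where
  V : Type
  rel : V → V → Prop
  refl : ∀ v, rel v v
  symm : ∀ {v w}, rel v w → rel w v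

/-- A homomorphism of graphs: a function on vertices preserving the relation. -/
@[ext]
structure GphHom (Γ Δ : Gph) where
  toFun : Γ.V → Δ.V
  map_rel : ∀ {v w}, Γ.rel v w → Δ.rel (toFun v) (toFun w)

/-- The identity graph homomorphism. -/
def GphHom.id (Γ : Gph) : GphHom Γ Γ :=
  ⟨fun v => v, fun h => h⟩

/-- Composition of graph homomorphisms. -/
def GphHom.comp {Γ Δ Θ : Gph} (ψ : GphHom Δ Θ) (φ : GphHom Γ Δ) : GphHom Γ Θ :=
  ⟨fun v => ψ.toFun (φ.toFun v), fun h => ψ.map_rel (φ.map_rel h)⟩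

/-- The commutator relators of the right-angled Artin group of `Γ`. -/
def raagRels (Γ : Gph) : Set (FreeGroup Γ.V) :=
  { r | ∃ v w, Γ.rel v w ∧
      r = FreeGroup.of v * FreeGroup.of w * (FreeGroup.of v)⁻¹ * (FreeGroup.of w)⁻¹ }

/-- The right-angled Artin group of a graph `Γ`: generated by the vertices,
with commutation relations given by the edges. -/
abbrev Raag (Γ : Gph) : Type :=
  PresentedGroup (raagRels Γ)

/-- The image of a vertex `v` as a generator of the right-angled Artin group. -/
def Raag.of {Γ : Gph} (v : Γ.V) : Raag Γ :=
  PresentedGroup.of v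

/-- Related vertices commute in the right-angled Artin group. -/
theorem Raag.commute_of {Γ : Gph} {v w : Γ.V} (h : Γ.rel v w) :
    Commute (Raag.of v) (Raag.of w) := by
  have h1 : (PresentedGroup.mk (raagRels Γ))
      (FreeGroup.of v * FreeGroup.of w * (FreeGroup.of v)⁻¹ * (FreeGroup.of w)⁻¹) = 1 := by
    apply (QuotientGroup.eq_one_iff _).2
    exact Subgroup.subset_normalClosure ⟨v, w, h, rfl⟩
  rw [← commutatorElement_eq_one_iff_commute]
  simpa only [commutatorElement_def, map_mul, map_inv, Raag.of, PresentedGroup.of] using h1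

/-- The universal property of the right-angled Artin group. -/
def Raag.lift {Γ : Gph} {G : Type*} [Group G] (f : Γ.V → G)
    (hf : ∀ {v w}, Γ.rel v w → Commute (f v) (f w)) : Raag Γ →* G :=
  PresentedGroup.toGroup (f := f) (by
    rintro r ⟨v, w, hvw, rfl⟩
    have := commutatorElement_eq_one_iff_commute.2 (hf hvw)
    rw [commutatorElement_def] at this
    simpa only [map_mul, map_inv, FreeGroup.lift_apply_of] using this)

@[simp]
theorem Raag.lift_of {Γ : Gph} {G : Type*} [Group G] (f : Γ.V → G)
    (hf : ∀ {v w}, Γ.rel v w → Commute (f v) (f w)) (v : Γ.V) :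
    Raag.lift f hf (Raag.of v) = f v :=
  PresentedGroup.toGroup.of _

theorem Raag.hom_ext {Γ : Gph} {G : Type*} [Group G] {f g : Raag Γ →* G}
    (h : ∀ v, f (Raag.of v) = g (Raag.of v)) : f = g :=
  PresentedGroup.ext h

/-- The group homomorphism `Aφ` induced by a graph homomorphism `φ`. -/
def GphHom.map {Γ Δ : Gph} (φ : GphHom Γ Δ) : Raag Γ →* Raag Δ :=
  Raag.lift (fun v => Raag.of (φ.toFun v)) (fun h => Raag.commute_of (φ.map_rel h))

@[simp]
theorem GphHom.map_of {Γ Δ : Gph} (φ : GphHom Γ Δ) (v : Γ.V) :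
    φ.map (Raag.of v) = Raag.of (φ.toFun v) :=
  Raag.lift_of _ (fun h => Raag.commute_of (φ.map_rel h)) v

/-- The commutation graph of a group `G`: vertices are elements of `G`,
related exactly when they commute. -/
abbrev commGraph (G : Type) [Group G] : Gph where
  V := G
  rel g h := g * h = h * g
  refl _ := rfl
  symm h := h.symm

/-- `AC G`: the right-angled Artin group of the commutation graph of `G`. -/
abbrev AC (G : Type) [Group G] : Type :=
  Raag (commGraph G)

/-- `ACf : ACG →* ACH`, `[g] ↦ [f g]`, induced by a group homomorphism `f`. -/
def ACmap {G H : Type} [Group G] [Group H] (f : G →* H) : AC G →* AC H :=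
  GphHom.map (Γ := commGraph G) (Δ := commGraph H)
    ⟨f, fun {a b} h => show f a * f b = f b * f a by
      rw [← map_mul, show a * b = b * a from h, map_mul]⟩

@[simp]
theorem ACmap_of {G H : Type} [Group G] [Group H] (f : G →* H) (g : G) :
    ACmap f (Raag.of (Γ := commGraph G) g) = Raag.of (Γ := commGraph H) (f g) :=
  GphHom.map_of _ _

/-- The counit `ε_G : ACG →* G`, `[g] ↦ g`. -/
def ACcounit (G : Type) [Group G] : AC G →* G :=
  Raag.lift (Γ := commGraph G) (fun g => g) (fun h => h)

@[simp]
theorem ACcounit_of {G : Type} [Group G] (g : G) :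
    ACcounit G (Raag.of (Γ := commGraph G) g) = g :=
  Raag.lift_of (Γ := commGraph G) (fun g => g) (fun h => h) g

/-- The comultiplication `δ_G : ACG →* AC(ACG)`, `[g] ↦ [[g]]`. -/
def ACcomul (G : Type) [Group G] : AC G →* AC (AC G) :=
  Raag.lift (Γ := commGraph G)
    (fun g => Raag.of (Γ := commGraph (AC G)) (Raag.of (Γ := commGraph G) g))
    (fun h => Raag.commute_of (Raag.commute_of h))

@[simp]
theorem ACcomul_of {G : Type} [Group G] (g : G) :
    ACcomul G (Raag.of (Γ := commGraph G) g) =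
      Raag.of (Γ := commGraph (AC G)) (Raag.of (Γ := commGraph G) g) :=
  Raag.lift_of (Γ := commGraph G) _ (fun h => Raag.commute_of (Raag.commute_of h)) g

/-- The canonical `AC`-coalgebra structure map on a right-angled Artin group,
sending each vertex generator `v` to `[v]`. -/
def raagCoalgStr (Γ : Gph) : Raag Γ →* AC (Raag Γ) :=
  Raag.lift (fun v => Raag.of (Γ := commGraph (Raag Γ)) (Raag.of v))
    (fun h => Raag.commute_of (Raag.commute_of h))

@[simp]
theorem raagCoalgStr_of {Γ : Gph} (v : Γ.V) :
    raagCoalgStr Γ (Raag.of v) = Raag.of (Γ := commGraph (Raag Γ)) (Raag.of v) :=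
  Raag.lift_of _ (fun h => Raag.commute_of (Raag.commute_of h)) v

/-- An `AC`-coalgebra structure on a group `G` is a group homomorphism
`𝔤 : G →* ACG` satisfying the counit and coassociativity laws. -/
def IsACCoalgebra {G : Type} [Group G] (𝔤 : G →* AC G) : Prop :=
  (ACcounit G).comp 𝔤 = MonoidHom.id G ∧ (ACmap 𝔤).comp 𝔤 = (ACcomul G).comp 𝔤

/-- `f` is an `AC`-cohomomorphism from `(G, 𝔤)` to `(H, 𝔥)`. -/
def IsACCohom {G H : Type} [Group G] [Group H]
    (𝔤 : G →* AC G) (𝔥 : H →* AC H) (f : G →* H) : Prop :=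
  𝔥.comp f = (ACmap f).comp 𝔤
/-- The full subgraph of `Γ` on a set `S` of vertices. -/
def Gph.full (Γ : Gph) (S : Set Γ.V) : Gph where
  V := S
  rel v w := Γ.rel v w
  refl v := Γ.refl v
  symm h := Γ.symm h
/-!
`Aα` is injective, since `Aρ` is a left inverse of it. Let `P` be the endomorphism of `AΓ` killing
the generators outside the set `S` of vertices where `α` and `β` agree, and `R` the endomorphism of
`AΔ` killing the generators outside the image of `α`. As `ρ` retracts both `α` and `β`, a vertex
`β v` lies in the image of `α` only if `v ∈ S`; hence `R ∘ Aβ = Aα ∘ P` and `R ∘ Aα = Aα`. So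
`Aα g = Aβ g` gives `Aα g = Aα (P g)`, i.e. `g = P g`, which lies in the subgroup generated by `S`.
That subgroup is the image of `AΘ` under the inclusion, which is injective because killing the
generators outside `S` retracts `AΓ` onto `AΘ`.
-/

theorem Raag.closure_range_of (Γ : Gph) :
    Subgroup.closure (Set.range (Raag.of (Γ := Γ))) = ⊤ :=
  PresentedGroup.closure_range_of _

theorem GphHom.map_comp {Γ Δ Θ : Gph} (ψ : GphHom Δ Θ) (φ : GphHom Γ Δ) :
    (ψ.comp φ).map = ψ.map.comp φ.map :=
  Raag.hom_ext fun _ => by simp [GphHom.comp]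

theorem GphHom.map_id (Γ : Gph) : (GphHom.id Γ).map = MonoidHom.id (Raag Γ) :=
  Raag.hom_ext fun _ => by simp [GphHom.id]

theorem GphHom.leftInverse_of_comp_eq_id {Γ Δ : Gph} {α : GphHom Γ Δ} {ρ : GphHom Δ Γ}
    (h : ρ.comp α = GphHom.id Γ) : Function.LeftInverse ρ.toFun α.toFun :=
  congrFun (congrArg GphHom.toFun h)

theorem GphHom.map_injective_of_comp_eq_id {Γ Δ : Gph} {α : GphHom Γ Δ} {ρ : GphHom Δ Γ}
    (h : ρ.comp α = GphHom.id Γ) : Function.Injective α.map := by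
  refine Function.LeftInverse.injective (g := ρ.map) fun g => ?_
  rw [← MonoidHom.comp_apply, ← GphHom.map_comp, h, GphHom.map_id, MonoidHom.id_apply]

namespace Gph

variable {Γ : Gph} (S : Set Γ.V)

def fullIncl : GphHom (Γ.full S) Γ :=
  ⟨Subtype.val, id⟩

@[simp]
theorem fullIncl_toFun (v : (Γ.full S).V) : (fullIncl S).toFun v = v.1 :=
  rfl

open Classical in
noncomputable def toFullGen (v : Γ.V) : Raag (Γ.full S) :=
  if h : v ∈ S then Raag.of (⟨v, h⟩ : (Γ.full S).V) else 1

theorem commute_toFullGen {v w : Γ.V} (hvw : Γ.rel v w) :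
    Commute (toFullGen S v) (toFullGen S w) := by
  by_cases hv : v ∈ S
  · by_cases hw : w ∈ S
    · simpa [toFullGen, hv, hw] using
        Raag.commute_of (show (Γ.full S).rel (⟨v, hv⟩ : S) (⟨w, hw⟩ : S) from hvw)
    · simp [toFullGen, hw]
  · simp [toFullGen, hv]

noncomputable def toFull : Raag Γ →* Raag (Γ.full S) :=
  Raag.lift (toFullGen S) (commute_toFullGen S)

theorem toFull_of_mem {v : Γ.V} (hv : v ∈ S) :
    toFull S (Raag.of v) = Raag.of (⟨v, hv⟩ : (Γ.full S).V) := by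
  simp [toFull, toFullGen, hv]

theorem toFull_of_notMem {v : Γ.V} (hv : v ∉ S) : toFull S (Raag.of v) = 1 := by
  simp [toFull, toFullGen, hv]

theorem toFull_comp_map_fullIncl : (toFull S).comp (fullIncl S).map = MonoidHom.id _ :=
  Raag.hom_ext fun v => by
    rw [MonoidHom.comp_apply, GphHom.map_of, fullIncl_toFun, toFull_of_mem S v.2]
    rfl

theorem map_fullIncl_injective : Function.Injective (fullIncl S).map :=
  Function.LeftInverse.injective (g := toFull S) (DFunLike.congr_fun (toFull_comp_map_fullIncl S))

theorem range_map_fullIncl :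
    (fullIncl S).map.range = Subgroup.closure (Raag.of '' S) := by
  rw [MonoidHom.range_eq_map, ← Raag.closure_range_of, MonoidHom.map_closure, ← Set.range_comp]
  congr 1
  ext x
  exact ⟨fun ⟨y, hy⟩ => ⟨y.1, y.2, hy⟩, fun ⟨a, ha, hx⟩ => ⟨⟨a, ha⟩, hx⟩⟩

noncomputable def fullEquivClosure :
    Raag (Γ.full S) ≃* Subgroup.closure (Raag.of '' S) :=
  (MonoidHom.ofInjective (map_fullIncl_injective S)).trans
    (MulEquiv.subgroupCongr (range_map_fullIncl S))

noncomputable def projFull : Raag Γ →* Raag Γ :=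
  (fullIncl S).map.comp (toFull S)

theorem projFull_of_mem {v : Γ.V} (hv : v ∈ S) : projFull S (Raag.of v) = Raag.of v := by
  rw [projFull, MonoidHom.comp_apply, toFull_of_mem S hv]
  exact GphHom.map_of _ _

theorem projFull_of_notMem {v : Γ.V} (hv : v ∉ S) : projFull S (Raag.of v) = 1 := by
  simp [projFull, toFull_of_notMem S hv]

theorem projFull_mem_closure (g : Raag Γ) : projFull S g ∈ Subgroup.closure (Raag.of '' S) :=
  range_map_fullIncl S ▸ MonoidHom.mem_range.2 ⟨_, rfl⟩

end Gph

theorem GphHom.projFull_range_comp_map {Γ Δ : Gph} (α : GphHom Γ Δ) :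
    (Gph.projFull (Set.range α.toFun)).comp α.map = α.map :=
  Raag.hom_ext fun v => by simp [Gph.projFull_of_mem _ (Set.mem_range_self v)]

section Coreflexive

variable {Γ Δ : Gph} {α β : GphHom Γ Δ} {ρ : GphHom Δ Γ}

theorem eq_of_mem_range_of_comp_eq_id (h₁ : ρ.comp α = GphHom.id Γ)
    (h₂ : ρ.comp β = GphHom.id Γ) {v : Γ.V} (hv : β.toFun v ∈ Set.range α.toFun) :
    α.toFun v = β.toFun v := by
  obtain ⟨w, hw⟩ := hv
  obtain rfl : w = v := by
    rw [← GphHom.leftInverse_of_comp_eq_id h₁ w, hw, GphHom.leftInverse_of_comp_eq_id h₂ v]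
  exact hw

theorem projFull_range_comp_map_eq (h₁ : ρ.comp α = GphHom.id Γ)
    (h₂ : ρ.comp β = GphHom.id Γ) :
    (Gph.projFull (Set.range α.toFun)).comp β.map =
      α.map.comp (Gph.projFull {v | α.toFun v = β.toFun v}) := by
  refine Raag.hom_ext fun v => ?_
  by_cases hv : α.toFun v = β.toFun v
  · simp [Gph.projFull_of_mem _ (show v ∈ {v | α.toFun v = β.toFun v} from hv),
      Gph.projFull_of_mem (Set.range α.toFun) ⟨v, hv⟩, hv]
  · simp [Gph.projFull_of_notMem _ (show v ∉ {v | α.toFun v = β.toFun v} from hv),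
      Gph.projFull_of_notMem (Set.range α.toFun) (mt (eq_of_mem_range_of_comp_eq_id h₁ h₂) hv)]

theorem eq_projFull_of_map_eq (h₁ : ρ.comp α = GphHom.id Γ) (h₂ : ρ.comp β = GphHom.id Γ)
    {g : Raag Γ} (hg : α.map g = β.map g) :
    g = Gph.projFull {v | α.toFun v = β.toFun v} g := by
  apply GphHom.map_injective_of_comp_eq_id h₁
  calc α.map g = Gph.projFull (Set.range α.toFun) (α.map g) :=
        (DFunLike.congr_fun α.projFull_range_comp_map g).symm
    _ = Gph.projFull (Set.range α.toFun) (β.map g) := by rw [hg]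
    _ = α.map (Gph.projFull {v | α.toFun v = β.toFun v} g) :=
        DFunLike.congr_fun (projFull_range_comp_map_eq h₁ h₂) g

theorem closure_eq_eqLocus_of_coreflexive (h₁ : ρ.comp α = GphHom.id Γ)
    (h₂ : ρ.comp β = GphHom.id Γ) :
    Subgroup.closure (Raag.of '' {v | α.toFun v = β.toFun v}) = α.map.eqLocus β.map := by
  refine le_antisymm ((Subgroup.closure_le _).2 ?_) fun g hg => ?_
  · rintro _ ⟨v, hv, rfl⟩
    change α.map (Raag.of v) = β.map (Raag.of v)
    rw [GphHom.map_of, GphHom.map_of]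
    exact congrArg Raag.of hv
  · rw [eq_projFull_of_map_eq h₁ h₂ hg]
    exact Gph.projFull_mem_closure _ g

end Coreflexive

/-- The raag functor preserves equalizers of coreflexive pairs: if `α, β : Γ → Δ`
admit a common retract `ρ` and `Θ` is the full subgraph of `Γ` on the vertices
where `α` and `β` agree, then the subgroup of `AΓ` generated by the vertices of
`Θ` is exactly the equalizer subgroup `{g | (Aα)g = (Aβ)g}`, and this subgroup
is isomorphic to `AΘ`. -/
theorem raag_preserves_coreflexive_equalizers {Γ Δ : Gph} (α β : GphHom Γ Δ)
    (ρ : GphHom Δ Γ) (h₁ : ρ.comp α = GphHom.id Γ) (h₂ : ρ.comp β = GphHom.id Γ) :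
    ((Subgroup.closure (Raag.of '' {v | α.toFun v = β.toFun v}) : Subgroup (Raag Γ)) :
        Set (Raag Γ)) = {g : Raag Γ | α.map g = β.map g} ∧
    Nonempty (Raag (Γ.full {v | α.toFun v = β.toFun v}) ≃*
      (Subgroup.closure (Raag.of '' {v | α.toFun v = β.toFun v}) : Subgroup (Raag Γ))) :=
  ⟨congrArg SetLike.coe (closure_eq_eqLocus_of_coreflexive h₁ h₂), ⟨Gph.fullEquivClosure _⟩⟩
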